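/- Let L and Q be graph Laplacian matrices (symmetric, zero row sums, nonpositive off-diagonals) on N nodes such that for every i ≠ j at most one of L_{i,j}, Q_{i,j} is nonzero. Fix ε > 0 and define γ_i = ε / (Q_{i,i} − Σ_{j≠i} Q_{i,j}) for rows with positive denominator, and γ = min_i γ_i. Then the matrix A = L − γQ + εI has all Gershgorin disc left-ends nonnegative, and hence A is positive semi-definite. -/

import Mathlib

open Matrix Finset
open scoped ComplexOrder

/-!
Because the off-diagonal supports of `L` and `Q` are disjoint and `γ ≥ 0`, every off-diagonal
entry of `A` has absolute value `-L i j - γ * Q i j`. Together with the zero row sums of `L`, the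
`i`-th Gershgorin left-end collapses to `ε - γ * d i`, which is nonnegative: by the choice of `γ`
when `d i > 0`, and trivially otherwise. Every eigenvalue of a symmetric matrix lies in one of its
Gershgorin discs, so nonnegative left-ends force nonnegative eigenvalues.
-/

theorem Matrix.IsHermitian.posSemidef_of_sum_norm_offDiag_le_re {𝕜 n : Type*} [RCLike 𝕜]
    [Fintype n] [DecidableEq n] {A : Matrix n n 𝕜} (hA : A.IsHermitian)
    (hdom : ∀ i, ∑ j ∈ univ.erase i, ‖A i j‖ ≤ RCLike.re (A i i)) : A.PosSemidef := by
  rw [hA.posSemidef_iff_eigenvalues_nonneg]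
  intro i
  have hμ : Module.End.HasEigenvalue (toLin' A) (hA.eigenvalues i : 𝕜) := by
    rw [Module.End.hasEigenvalue_iff_mem_spectrum, spectrum_toLin',
      ← RCLike.algebraMap_eq_ofReal, spectrum.algebraMap_mem_iff]
    exact hA.eigenvalues_mem_spectrum_real i
  obtain ⟨k, hk⟩ := eigenvalue_mem_ball hμ
  rw [mem_closedBall_iff_norm'] at hk
  have hre : RCLike.re (A k k) - hA.eigenvalues i ≤ ‖A k k - hA.eigenvalues i‖ := by
    simpa using RCLike.re_le_norm (A k k - hA.eigenvalues i)
  show 0 ≤ hA.eigenvalues i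
  linarith [hdom k]

theorem abs_sub_mul_eq_of_nonpos_of_eq_zero_or {a b γ : ℝ} (ha : a ≤ 0) (hb : b ≤ 0)
    (hγ : 0 ≤ γ) (hab : a = 0 ∨ b = 0) : |a - γ * b| = -a - γ * b := by
  rcases hab with rfl | rfl
  · rw [abs_of_nonneg (by nlinarith)]; ring
  · rw [abs_of_nonpos (by linarith)]; ring

def Matrix.gershgorinLeftEnd {n : Type*} [Fintype n] [DecidableEq n] (A : Matrix n n ℝ) (i : n) :
    ℝ :=
  A i i - ∑ j ∈ univ \ {i}, |A i j|

theorem Matrix.IsSymm.posSemidef_of_gershgorinLeftEnd_nonneg {n : Type*} [Fintype n]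
    [DecidableEq n] {A : Matrix n n ℝ} (hA : A.IsSymm) (h : ∀ i, 0 ≤ A.gershgorinLeftEnd i) :
    A.PosSemidef :=
  (isHermitian_iff_isSymm.mpr hA).posSemidef_of_sum_norm_offDiag_le_re fun i => by
    simpa [gershgorinLeftEnd, sdiff_singleton_eq_erase, sub_nonneg] using h i

theorem Matrix.gershgorinLeftEnd_sub_smul_add_smul_one {n : Type*} [Fintype n] [DecidableEq n]
    {L Q : Matrix n n ℝ} (hLrow : ∀ i, ∑ j, L i j = 0)
    (hLoff : ∀ i j, i ≠ j → L i j ≤ 0) (hQoff : ∀ i j, i ≠ j → Q i j ≤ 0)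
    (hdisj : ∀ i j, i ≠ j → L i j = 0 ∨ Q i j = 0) {γ : ℝ} (hγ : 0 ≤ γ) (ε : ℝ) (i : n) :
    (L - γ • Q + ε • 1).gershgorinLeftEnd i = ε - γ * (Q i i - ∑ j ∈ univ \ {i}, Q i j) := by
  have hoff : ∑ j ∈ univ \ {i}, |(L - γ • Q + ε • 1) i j|
      = ∑ j ∈ univ \ {i}, (-L i j - γ * Q i j) := by
    refine sum_congr rfl fun j hj => ?_
    have hij : i ≠ j := Ne.symm (by simpa using hj)
    simpa [one_apply_ne hij] using
      abs_sub_mul_eq_of_nonpos_of_eq_zero_or (hLoff i j hij) (hQoff i j hij) hγ (hdisj i j hij)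
  have hLdiag : ∑ j ∈ univ \ {i}, L i j = -L i i := by
    rw [sum_sdiff_eq_sub (subset_univ _), hLrow i, sum_singleton, zero_sub]
  rw [gershgorinLeftEnd, hoff, sum_sub_distrib, sum_neg_distrib, ← mul_sum, hLdiag]
  simp only [add_apply, sub_apply, smul_apply, one_apply_eq, smul_eq_mul, mul_one]
  ring

theorem stmt7_general {N : ℕ} (L Q : Matrix (Fin N) (Fin N) ℝ)
    (hLsym : L.IsSymm) (hQsym : Q.IsSymm)
    (hLrow : ∀ i, ∑ j, L i j = 0)
    (hLoff : ∀ i j, i ≠ j → L i j ≤ 0) (hQoff : ∀ i j, i ≠ j → Q i j ≤ 0)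
    (hdisj : ∀ i j, i ≠ j → L i j = 0 ∨ Q i j = 0)
    (ε : ℝ) (hε : 0 < ε)
    (d : Fin N → ℝ) (hd : ∀ i, d i = Q i i - ∑ j ∈ Finset.univ \ {i}, Q i j)
    (S : Finset (Fin N)) (hS : ∀ i, i ∈ S ↔ 0 < d i) (hSne : S.Nonempty)
    (γ : ℝ) (hγ : γ = S.inf' hSne (fun i => ε / d i)) :
    let A := L - γ • Q + ε • (1 : Matrix (Fin N) (Fin N) ℝ)
    (∀ i, 0 ≤ A i i - ∑ j ∈ Finset.univ \ {i}, |A i j|) ∧ A.PosSemidef := by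
  intro A
  have hγ_nonneg : 0 ≤ γ :=
    hγ ▸ le_inf' hSne _ fun i hi => (div_pos hε ((hS i).1 hi)).le
  have hleft : ∀ i, 0 ≤ A.gershgorinLeftEnd i := by
    intro i
    rw [gershgorinLeftEnd_sub_smul_add_smul_one hLrow hLoff hQoff hdisj hγ_nonneg, ← hd i]
    by_cases hdi : 0 < d i
    · have hγ_le : γ ≤ ε / d i := hγ ▸ S.inf'_le _ ((hS i).2 hdi)
      rw [le_div_iff₀ hdi] at hγ_le
      linarith
    · nlinarith
  have hA : A.IsSymm := (hLsym.sub (hQsym.smul γ)).add (isSymm_one.smul ε)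
  exact ⟨hleft, hA.posSemidef_of_gershgorinLeftEnd_nonneg hleft⟩

/-- With Laplacians L, Q of disjoint off-diagonal supports, ε > 0, and
γ = min_i ε/(Q_ii - Σ_{j≠i}Q_ij) over rows with positive denominator, all Gershgorin
disc left-ends of A = L - γQ + εI are nonnegative and A is PSD. -/
theorem stmt7 {N : ℕ} (L Q : Matrix (Fin N) (Fin N) ℝ)
    (hLsym : L.IsSymm) (hQsym : Q.IsSymm)
    (hLrow : ∀ i, ∑ j, L i j = 0) (hQrow : ∀ i, ∑ j, Q i j = 0)
    (hLoff : ∀ i j, i ≠ j → L i j ≤ 0) (hQoff : ∀ i j, i ≠ j → Q i j ≤ 0)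
    (hdisj : ∀ i j, i ≠ j → L i j = 0 ∨ Q i j = 0)
    (ε : ℝ) (hε : 0 < ε)
    (d : Fin N → ℝ) (hd : ∀ i, d i = Q i i - ∑ j ∈ Finset.univ \ {i}, Q i j)
    (S : Finset (Fin N)) (hS : ∀ i, i ∈ S ↔ 0 < d i) (hSne : S.Nonempty)
    (γ : ℝ) (hγ : γ = S.inf' hSne (fun i => ε / d i)) :
    let A := L - γ • Q + ε • (1 : Matrix (Fin N) (Fin N) ℝ)
    (∀ i, 0 ≤ A i i - ∑ j ∈ Finset.univ \ {i}, |A i j|) ∧ A.PosSemidef :=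
  stmt7_general L Q hLsym hQsym hLrow hLoff hQoff hdisj ε hε d hd S hS hSne γ hγ
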